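/- arXiv:1710.05375 — 8 statements merged into one kernel-verified Lean document; each statement's English description precedes it below -/
import Mathlib

section
/- Let g = g_{-2} ⊕ g_{-1} ⊕ g_0 ⊕ g_1 ⊕ g_2 be a 5-graded Lie algebra and σ: g → g a grade-reversing involution. Then g_{-1} with the triple product (xyz) := [[x, σ(y)], z] is a Kantor triple system. -/
/-- The triple product `(xyz) = [[x, σ(y)], z]` on a Lie algebra with involution. -/
def trip {L : Type*} [LieRing L] [LieAlgebra ℂ L]
    (σ : L →ₗ⁅ℂ⁆ L) (a b c : L) : L := ⁅⁅a, σ b⁆, c⁆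

/-- The corresponding Kantor tensor `K_{ab}(c) = (acb) - (bca)`. -/
def tripK {L : Type*} [LieRing L] [LieAlgebra ℂ L]
    (σ : L →ₗ⁅ℂ⁆ L) (a b c : L) : L := trip σ a c b - trip σ b c a

/-- The Kantor tensor is `[[a,b], σ c]`. -/
lemma tripK_eq {L : Type*} [LieRing L] [LieAlgebra ℂ L]
    (σ : L →ₗ⁅ℂ⁆ L) (a b c : L) : tripK σ a b c = ⁅⁅a, b⁆, σ c⁆ := by
  rw [tripK, trip, trip, lie_lie a b (σ c),
    show ⁅⁅a, σ c⁆, b⁆ = -⁅b, ⁅a, σ c⁆⁆ from (lie_skew _ _).symm,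
    show ⁅⁅b, σ c⁆, a⁆ = -⁅a, ⁅b, σ c⁆⁆ from (lie_skew _ _).symm]
  abel

/-- If `g` is a 5-graded Lie algebra and `σ` a grade-reversing involution, then
`g₋₁` with the product `(xyz) = [[x, σ(y)], z]` is a Kantor triple system. -/
theorem five_graded_with_involution_gives_KTS
    {L : Type*} [LieRing L] [LieAlgebra ℂ L]
    (g : ℤ → Submodule ℂ L)
    (hdecomp : DirectSum.IsInternal g)
    (hgrad : ∀ p q : ℤ, ∀ x ∈ g p, ∀ y ∈ g q, ⁅x, y⁆ ∈ g (p + q))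
    (hbound : ∀ p : ℤ, 2 < |p| → g p = ⊥)
    (σ : L →ₗ⁅ℂ⁆ L)
    (hσ2 : ∀ x : L, σ (σ x) = x)
    (hσg : ∀ p : ℤ, ∀ x ∈ g p, σ x ∈ g (-p)) :
    ∀ u ∈ g (-1), ∀ v ∈ g (-1), ∀ x ∈ g (-1), ∀ y ∈ g (-1), ∀ z ∈ g (-1),
      trip σ x y z ∈ g (-1) ∧
      trip σ u v (trip σ x y z)
        = trip σ (trip σ u v x) y z - trip σ x (trip σ v u y) z
          + trip σ x y (trip σ u v z) ∧
      (∀ w ∈ g (-1),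
        tripK σ (tripK σ u v x) y w
          = tripK σ (trip σ y x u) v w - tripK σ (trip σ y x v) u w) := by
  intro u hu v hv x hx y hy z hz
  refine ⟨?_, ?_, ?_⟩
  · -- membership
    have h1 : σ y ∈ g 1 := by simpa using hσg (-1) y hy
    have h2 : ⁅x, σ y⁆ ∈ g 0 := by simpa using hgrad (-1) 1 x hx (σ y) h1
    simpa [trip] using hgrad 0 (-1) _ h2 z hz
  · -- identity (i): pure Lie algebra identity
    have hσy : σ ⁅⁅v, σ u⁆, y⁆ = -⁅⁅u, σ v⁆, σ y⁆ := by
      rw [LieHom.map_lie, LieHom.map_lie, hσ2,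
        show ⁅σ v, u⁆ = -⁅u, σ v⁆ from (lie_skew _ _).symm, neg_lie]
    simp only [trip, hσy]
    simp only [lie_lie, lie_neg, neg_lie, lie_sub, sub_lie, lie_add, add_lie, neg_neg,
      sub_eq_add_neg, neg_add]
    abel
  · -- identity (ii)
    intro w hw
    -- ⁅⁅u,v⁆, y⁆ = 0 since it lies in g (-3) = ⊥
    have hA : ⁅u, v⁆ ∈ g (-2) := by simpa using hgrad (-1) (-1) u hu v hv
    have h0 : ⁅⁅u, v⁆, y⁆ = 0 := by
      have h3 : ⁅⁅u, v⁆, y⁆ ∈ g (-3) := by simpa using hgrad (-2) (-1) _ hA y hy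
      have : g (-3) = ⊥ := hbound (-3) (by norm_num)
      simpa [this] using h3
    have key : ⁅⁅⁅u, v⁆, σ x⁆, y⁆ = ⁅⁅⁅y, σ x⁆, u⁆, v⁆ - ⁅⁅⁅y, σ x⁆, v⁆, u⁆ := by
      rw [lie_lie ⁅u, v⁆ (σ x) y, h0, lie_zero, sub_zero,
        show ⁅σ x, y⁆ = -⁅y, σ x⁆ from (lie_skew _ _).symm, lie_neg,
        show -⁅⁅u, v⁆, ⁅y, σ x⁆⁆ = ⁅⁅y, σ x⁆, ⁅u, v⁆⁆ from lie_skew _ _,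
        leibniz_lie,
        show ⁅u, ⁅⁅y, σ x⁆, v⁆⁆ = -⁅⁅⁅y, σ x⁆, v⁆, u⁆ from (lie_skew _ _).symm]
      abel
    rw [show tripK σ u v x = ⁅⁅u, v⁆, σ x⁆ from tripK_eq σ u v x,
      tripK_eq, tripK_eq, tripK_eq]
    simp only [trip]
    rw [key, sub_lie]
end

section
/- If a 5-graded Lie algebra g with grade-reversing involution σ is transitive, then the associated Kantor triple system on g_{-1} with product (xyz) = [[x,σ(y)],z] is centerless. -/
/-- If a 5-graded Lie algebra with grade-reversing involution is transitive,
then the associated Kantor triple system on `g₋₁` is centerless. -/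
theorem transitive_implies_centerless
    {L : Type*} [LieRing L] [LieAlgebra ℂ L]
    (g : ℤ → Submodule ℂ L)
    (hdecomp : DirectSum.IsInternal g)
    (hgrad : ∀ p q : ℤ, ∀ x ∈ g p, ∀ y ∈ g q, ⁅x, y⁆ ∈ g (p + q))
    (hbound : ∀ p : ℤ, 2 < |p| → g p = ⊥)
    (σ : L →ₗ⁅ℂ⁆ L)
    (hσ2 : ∀ x : L, σ (σ x) = x)
    (hσg : ∀ p : ℤ, ∀ x ∈ g p, σ x ∈ g (-p))
    (htrans : ∀ p : ℤ, 0 ≤ p → ∀ D ∈ g p,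
      (∀ x ∈ g (-1), ⁅D, x⁆ = 0) → D = 0) :
    ∀ v ∈ g (-1), (∀ x ∈ g (-1), ∀ y ∈ g (-1), trip σ x v y = 0) → v = 0 := by
  intro v hv hcv
  have hσv : σ v ∈ g 1 := by simpa using hσg (-1) v hv
  have hz : ∀ x ∈ g (-1), ⁅σ v, x⁆ = 0 := by
    intro x hx
    have hD : ⁅x, σ v⁆ ∈ g 0 := by simpa using hgrad (-1) 1 x hx (σ v) hσv
    have h0 : ⁅x, σ v⁆ = 0 :=
      htrans 0 le_rfl _ hD (fun y hy => hcv x hx y hy)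
    rw [← lie_skew, h0, neg_zero]
  have hσv0 : σ v = 0 := htrans 1 (by norm_num) _ hσv hz
  have h := hσ2 v
  rw [hσv0] at h
  simpa using h.symm
end

section
/- Let g be a Z₂-graded Lie algebra g = g₀ ⊕ g₁ with g₀ acting faithfully on g₁ and [g₁,g₁] = g₀. A Z₂-graded subspace k = k₀ ⊕ k₁ is an ideal of g if and only if: k₀ is an ideal of the Lie algebra g₀, k₁ is an ideal of the Lie triple system T = g₁ (i.e., [[k₁,g₁],g₁] ⊆ k₁), and [k₁,g₁] ⊆ k₀ ⊆ {x ∈ g₀ : [x,g₁] ⊆ k₁}. -/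
/-- Characterization of ℤ₂-graded ideals of a ℤ₂-graded Lie algebra
`g = g₀ ⊕ g₁` with `g₀` acting faithfully on `g₁` and `[g₁,g₁] = g₀`. -/
theorem graded_ideal_characterization
    {L : Type*} [LieRing L] [LieAlgebra ℂ L]
    (g0 g1 : Submodule ℂ L)
    (hcompl : IsCompl g0 g1)
    (h00 : ∀ x ∈ g0, ∀ y ∈ g0, ⁅x, y⁆ ∈ g0)
    (h01 : ∀ x ∈ g0, ∀ y ∈ g1, ⁅x, y⁆ ∈ g1)
    (h11 : ∀ x ∈ g1, ∀ y ∈ g1, ⁅x, y⁆ ∈ g0)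
    (hfaith : ∀ x ∈ g0, (∀ y ∈ g1, ⁅x, y⁆ = 0) → x = 0)
    (hgen : ∀ x ∈ g0,
      x ∈ Submodule.span ℂ {z : L | ∃ a ∈ g1, ∃ b ∈ g1, z = ⁅a, b⁆})
    (k0 k1 : Submodule ℂ L) (hk0 : k0 ≤ g0) (hk1 : k1 ≤ g1) :
    (∀ x : L, ∀ i ∈ k0 ⊔ k1, ⁅x, i⁆ ∈ k0 ⊔ k1) ↔
      ((∀ x ∈ g0, ∀ i ∈ k0, ⁅x, i⁆ ∈ k0) ∧
       (∀ i ∈ k1, ∀ a ∈ g1, ∀ b ∈ g1, ⁅⁅i, a⁆, b⁆ ∈ k1) ∧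
       (∀ i ∈ k1, ∀ a ∈ g1, ⁅i, a⁆ ∈ k0) ∧
       (∀ x ∈ k0, ∀ a ∈ g1, ⁅x, a⁆ ∈ k1)) := by
  have hdis := hcompl.disjoint
  constructor
  · intro hid
    -- elements of k0 ⊔ k1 lying in g0 are in k0, similarly for g1
    have mem0 : ∀ v ∈ k0 ⊔ k1, v ∈ g0 → v ∈ k0 := by
      intro v hv hvg
      obtain ⟨a, ha, b, hb, rfl⟩ := Submodule.mem_sup.mp hv
      have hb0 : b ∈ g0 := by
        have hba : b = (a + b) - a := by abel
        rw [hba]; exact Submodule.sub_mem _ hvg (hk0 ha)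
      have hbz : b = 0 := Submodule.disjoint_def.mp hdis b hb0 (hk1 hb)
      simpa [hbz] using ha
    have mem1 : ∀ v ∈ k0 ⊔ k1, v ∈ g1 → v ∈ k1 := by
      intro v hv hvg
      obtain ⟨a, ha, b, hb, rfl⟩ := Submodule.mem_sup.mp hv
      have ha1 : a ∈ g1 := by
        have haa : a = (a + b) - b := by abel
        rw [haa]; exact Submodule.sub_mem _ hvg (hk1 hb)
      have haz : a = 0 := Submodule.disjoint_def.mp hdis a (hk0 ha) ha1
      simpa [haz] using hb
    refine ⟨?_, ?_, ?_, ?_⟩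
    · intro x hx i hi
      exact mem0 _ (hid x _ (Submodule.mem_sup_left hi)) (h00 x hx i (hk0 hi))
    · intro i hi a ha b hb
      have h1 : ⁅i, a⁆ ∈ k0 ⊔ k1 := by
        rw [← lie_skew]
        exact Submodule.neg_mem _ (hid a i (Submodule.mem_sup_right hi))
      have h2 : ⁅⁅i, a⁆, b⁆ ∈ k0 ⊔ k1 := by
        rw [← lie_skew]
        exact Submodule.neg_mem _ (hid b _ h1)
      exact mem1 _ h2 (h01 _ (h11 i (hk1 hi) a ha) b hb)
    · intro i hi a ha
      have h1 : ⁅i, a⁆ ∈ k0 ⊔ k1 := by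
        rw [← lie_skew]
        exact Submodule.neg_mem _ (hid a i (Submodule.mem_sup_right hi))
      exact mem0 _ h1 (h11 i (hk1 hi) a ha)
    · intro x hx a ha
      have h1 : ⁅x, a⁆ ∈ k0 ⊔ k1 := by
        rw [← lie_skew]
        exact Submodule.neg_mem _ (hid a x (Submodule.mem_sup_left hx))
      exact mem1 _ h1 (h01 x (hk0 hx) a ha)
  · rintro ⟨c1, c2, c3, c4⟩ x i hi
    obtain ⟨i0, hi0, i1, hi1, rfl⟩ := Submodule.mem_sup.mp hi
    have hx : x ∈ g0 ⊔ g1 := by rw [hcompl.sup_eq_top]; trivial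
    obtain ⟨x0, hx0, x1, hx1, rfl⟩ := Submodule.mem_sup.mp hx
    -- key: [g0, k1] ⊆ k1
    have key : ∀ y ∈ g0, ∀ m ∈ k1, ⁅y, m⁆ ∈ k1 := by
      intro y hy m hm
      have hy' := hgen y hy
      refine Submodule.span_induction ?_ ?_ ?_ ?_ hy'
      · rintro z ⟨a, ha, b, hb, rfl⟩
        have e : ⁅⁅a, b⁆, m⁆ = ⁅⁅m, b⁆, a⁆ - ⁅⁅m, a⁆, b⁆ := by
          rw [lie_lie, ← lie_skew b m, ← lie_skew a m, lie_neg, lie_neg,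
            lie_skew, lie_skew]
        rw [e]
        exact Submodule.sub_mem _ (c2 m hm b hb a ha) (c2 m hm a ha b hb)
      · simp
      · intro u v _ _ hu hv
        rw [add_lie]; exact Submodule.add_mem _ hu hv
      · intro c u _ hu
        rw [smul_lie]; exact Submodule.smul_mem _ c hu
    have t1 : ⁅x0, i0⁆ ∈ k0 := c1 x0 hx0 i0 hi0
    have t2 : ⁅x0, i1⁆ ∈ k1 := key x0 hx0 i1 hi1
    have t3 : ⁅x1, i0⁆ ∈ k1 := by
      rw [← lie_skew]
      exact Submodule.neg_mem _ (c4 i0 hi0 x1 hx1)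
    have t4 : ⁅x1, i1⁆ ∈ k0 := by
      rw [← lie_skew]
      exact Submodule.neg_mem _ (c3 i1 hi1 x1 hx1)
    rw [add_lie, lie_add, lie_add]
    refine Submodule.add_mem _ (Submodule.add_mem _ ?_ ?_) (Submodule.add_mem _ ?_ ?_)
    · exact Submodule.mem_sup_left t1
    · exact Submodule.mem_sup_right t2
    · exact Submodule.mem_sup_right t3
    · exact Submodule.mem_sup_left t4
end

section
/- If k₁ is an ideal of the Lie triple system T = g₁ associated to a Z₂-graded Lie algebra g = g₀ ⊕ g₁, then [k₁, g₁] ⊕ k₁ is a Z₂-graded ideal of g. -/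
/-- If `k₁` is an ideal of the Lie triple system `T = g₁` of a ℤ₂-graded Lie
algebra (standard embedding), then `[k₁, g₁] ⊕ k₁` is a ℤ₂-graded ideal of `g`. -/
theorem lts_ideal_gives_graded_ideal
    {L : Type*} [LieRing L] [LieAlgebra ℂ L]
    (g0 g1 : Submodule ℂ L)
    (hcompl : IsCompl g0 g1)
    (h00 : ∀ x ∈ g0, ∀ y ∈ g0, ⁅x, y⁆ ∈ g0)
    (h01 : ∀ x ∈ g0, ∀ y ∈ g1, ⁅x, y⁆ ∈ g1)
    (h11 : ∀ x ∈ g1, ∀ y ∈ g1, ⁅x, y⁆ ∈ g0)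
    (hgen : ∀ x ∈ g0,
      x ∈ Submodule.span ℂ {z : L | ∃ a ∈ g1, ∃ b ∈ g1, z = ⁅a, b⁆})
    (k1 : Submodule ℂ L) (hk1 : k1 ≤ g1)
    (hideal : ∀ i ∈ k1, ∀ a ∈ g1, ∀ b ∈ g1, ⁅⁅i, a⁆, b⁆ ∈ k1) :
    Submodule.span ℂ {z : L | ∃ i ∈ k1, ∃ a ∈ g1, z = ⁅i, a⁆} ≤ g0 ∧
    (∀ x : L, ∀ v ∈ Submodule.span ℂ {z : L | ∃ i ∈ k1, ∃ a ∈ g1, z = ⁅i, a⁆} ⊔ k1,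
      ⁅x, v⁆ ∈ Submodule.span ℂ {z : L | ∃ i ∈ k1, ∃ a ∈ g1, z = ⁅i, a⁆} ⊔ k1) := by
  set S : Set L := {z : L | ∃ i ∈ k1, ∃ a ∈ g1, z = ⁅i, a⁆} with hS
  set K0 : Submodule ℂ L := Submodule.span ℂ S with hK0def
  have hmemS : ∀ i ∈ k1, ∀ a ∈ g1, ⁅i, a⁆ ∈ K0 := fun i hi a ha =>
    Submodule.subset_span ⟨i, hi, a, ha, rfl⟩
  have hK0 : K0 ≤ g0 := by
    rw [hK0def, Submodule.span_le]
    rintro z ⟨i, hi, a, ha, rfl⟩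
    exact h11 i (hk1 hi) a ha
  refine ⟨hK0, ?_⟩
  -- [g0, k1] ⊆ k1
  have hA : ∀ x ∈ g0, ∀ i ∈ k1, ⁅x, i⁆ ∈ k1 := by
    intro x hx i hi
    have hx' := hgen x hx
    clear hx
    induction hx' using Submodule.span_induction with
    | mem z hz =>
      obtain ⟨a, ha, b, hb, rfl⟩ := hz
      have key : ⁅⁅a, b⁆, i⁆ = ⁅⁅i, b⁆, a⁆ - ⁅⁅i, a⁆, b⁆ := by
        rw [lie_lie, ← lie_skew b i, ← lie_skew a i, lie_neg, lie_neg,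
          ← lie_skew a ⁅i, b⁆, ← lie_skew b ⁅i, a⁆]
        abel
      rw [key]
      exact sub_mem (hideal i hi b hb a ha) (hideal i hi a ha b hb)
    | zero => simp
    | add y z _ _ hy hz => rw [add_lie]; exact add_mem hy hz
    | smul c y _ hy => rw [smul_lie]; exact Submodule.smul_mem _ _ hy
  -- [g0, K0] ⊆ K0
  have h0K : ∀ x ∈ g0, ∀ v ∈ K0, ⁅x, v⁆ ∈ K0 := by
    intro x hx v hv
    induction hv using Submodule.span_induction with
    | mem z hz =>
      obtain ⟨i, hi, a, ha, rfl⟩ := hz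
      rw [leibniz_lie]
      exact add_mem (hmemS _ (hA x hx i hi) a ha) (hmemS i hi _ (h01 x hx a ha))
    | zero => simp
    | add y z _ _ hy hz => rw [lie_add]; exact add_mem hy hz
    | smul c y _ hy => rw [lie_smul]; exact Submodule.smul_mem _ _ hy
  -- [g1, K0] ⊆ k1
  have h1K : ∀ x ∈ g1, ∀ v ∈ K0, ⁅x, v⁆ ∈ k1 := by
    intro x hx v hv
    induction hv using Submodule.span_induction with
    | mem z hz =>
      obtain ⟨i, hi, a, ha, rfl⟩ := hz
      rw [← lie_skew]
      exact neg_mem (hideal i hi a ha x hx)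
    | zero => simp
    | add y z _ _ hy hz => rw [lie_add]; exact add_mem hy hz
    | smul c y _ hy => rw [lie_smul]; exact Submodule.smul_mem _ _ hy
  -- [g1, k1] ⊆ K0
  have h1k : ∀ x ∈ g1, ∀ i ∈ k1, ⁅x, i⁆ ∈ K0 := by
    intro x hx i hi
    rw [← lie_skew]
    exact neg_mem (hmemS i hi x hx)
  intro x v hv
  have hxtop : x ∈ g0 ⊔ g1 := by rw [hcompl.sup_eq_top]; trivial
  obtain ⟨x0, hx0, x1, hx1, rfl⟩ := Submodule.mem_sup.mp hxtop
  obtain ⟨v0, hv0, v1, hv1, rfl⟩ := Submodule.mem_sup.mp hv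
  rw [add_lie, lie_add, lie_add]
  refine add_mem (add_mem ?_ ?_) (add_mem ?_ ?_)
  · exact Submodule.mem_sup_left (h0K x0 hx0 v0 hv0)
  · exact Submodule.mem_sup_right (hA x0 hx0 v1 hv1)
  · exact Submodule.mem_sup_right (h1K x1 hx1 v0 hv0)
  · exact Submodule.mem_sup_left (h1k x1 hx1 v1 hv1)
end

section
/- A centerless Kantor triple system V is K-simple if and only if it admits no nontrivial P-ideal, where a P-ideal is a pair (I⁺, I⁻) of subspaces satisfying (I^ε V V) + (V I^{−ε} V) + (V V I^ε) ⊆ I^ε for ε = ±1. -/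
/-- The Kantor tensor `K_{ab}(c) = (acb) - (bca)` of a triple product `t`. -/
def Ktensor {V : Type*} [AddCommGroup V] [Module ℂ V]
    (t : V →ₗ[ℂ] V →ₗ[ℂ] V →ₗ[ℂ] V) (a b c : V) : V :=
  t a c b - t b c a

/-- A centerless Kantor triple system is K-simple if and only if it admits no
nontrivial P-ideal. -/
theorem Ksimple_iff_no_nontrivial_Pideal
    {V : Type*} [AddCommGroup V] [Module ℂ V] [Nontrivial V]
    (t : V →ₗ[ℂ] V →ₗ[ℂ] V →ₗ[ℂ] V)
    (ax1 : ∀ u v x y z : V,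
      t u v (t x y z) = t (t u v x) y z - t x (t v u y) z + t x y (t u v z))
    (ax2 : ∀ u v x y w : V,
      Ktensor t (Ktensor t u v x) y w
        = Ktensor t (t y x u) v w - Ktensor t (t y x v) u w)
    (hcenterless : ∀ v : V, (∀ x y : V, t x v y = 0) → v = 0) :
    (∀ I : Submodule ℂ V,
        (∀ x y : V, ∀ i ∈ I, t x y i ∈ I ∧ t i x y ∈ I) → I = ⊥ ∨ I = ⊤) ↔
    (∀ Ip Im : Submodule ℂ V,
        (∀ i ∈ Ip, ∀ x y : V, t i x y ∈ Ip ∧ t x y i ∈ Ip) →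
        (∀ m ∈ Im, ∀ x y : V, t x m y ∈ Ip) →
        (∀ m ∈ Im, ∀ x y : V, t m x y ∈ Im ∧ t x y m ∈ Im) →
        (∀ i ∈ Ip, ∀ x y : V, t x i y ∈ Im) →
        (Ip = ⊥ ∧ Im = ⊥) ∨ (Ip = ⊤ ∧ Im = ⊤)) := by
  constructor
  · -- K-simple ⇒ no nontrivial P-ideal
    intro hK Ip Im h1 h2 h3 h4
    have hIp : Ip = ⊥ ∨ Ip = ⊤ :=
      hK Ip (fun x y i hi => ⟨(h1 i hi x y).2, (h1 i hi x y).1⟩)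
    have hIm : Im = ⊥ ∨ Im = ⊤ :=
      hK Im (fun x y i hi => ⟨(h3 i hi x y).2, (h3 i hi x y).1⟩)
    have nt : ∃ a : V, a ≠ 0 := by
      obtain ⟨a, b, hab⟩ := exists_pair_ne V
      rcases eq_or_ne a 0 with ha | ha
      · exact ⟨b, fun hb => hab (ha.trans hb.symm)⟩
      · exact ⟨a, ha⟩
    rcases hIp with hp | hp <;> rcases hIm with hm | hm
    · exact Or.inl ⟨hp, hm⟩
    · -- Ip = ⊥, Im = ⊤ : contradiction
      exfalso
      obtain ⟨a, ha⟩ := nt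
      apply ha
      apply hcenterless
      intro x y
      have := h2 a (by rw [hm]; trivial) x y
      rw [hp] at this
      simpa using this
    · -- Ip = ⊤, Im = ⊥ : contradiction
      exfalso
      obtain ⟨a, ha⟩ := nt
      apply ha
      apply hcenterless
      intro x y
      have := h4 a (by rw [hp]; trivial) x y
      rw [hm] at this
      simpa using this
    · exact Or.inr ⟨hp, hm⟩
  · -- no nontrivial P-ideal ⇒ K-simple
    intro hP I hI
    -- middle multiplier ideal
    set Im : Submodule ℂ V :=
      { carrier := {v | ∀ a b : V, t a v b ∈ I}
        add_mem' := by
          intro u v hu hv a b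
          have : t a (u + v) b = t a u b + t a v b := by simp
          rw [this]; exact I.add_mem (hu a b) (hv a b)
        zero_mem' := by
          intro a b
          have : t a (0 : V) b = 0 := by simp
          rw [this]; exact I.zero_mem
        smul_mem' := by
          intro c v hv a b
          have : t a (c • v) b = c • t a v b := by simp
          rw [this]; exact I.smul_mem c (hv a b) } with hImdef
    have memIm : ∀ v : V, v ∈ Im ↔ ∀ a b : V, t a v b ∈ I := fun v => Iff.rfl
    have hc1 : ∀ i ∈ I, ∀ x y : V, t i x y ∈ I ∧ t x y i ∈ I :=
      fun i hi x y => ⟨(hI x y i hi).2, (hI x y i hi).1⟩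
    have hc2 : ∀ m ∈ Im, ∀ x y : V, t x m y ∈ I := fun m hm x y => hm x y
    have hc4 : ∀ i ∈ I, ∀ x y : V, t x i y ∈ Im := by
      intro i hi x y
      rw [memIm]
      intro a b
      have e : t a (t x i y) b
          = t (t i x a) y b + t a y (t i x b) - t i x (t a y b) := by
        rw [ax1 i x a y b]; abel
      rw [e]
      exact I.sub_mem
        (I.add_mem (hc1 _ (hc1 i hi x a).1 y b).1 (hI a y _ (hc1 i hi x b).1).1)
        (hc1 i hi x (t a y b)).1
    have hc3 : ∀ m ∈ Im, ∀ x y : V, t m x y ∈ Im ∧ t x y m ∈ Im := by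
      intro m hm x y
      constructor
      · rw [memIm]
        intro a b
        have e : t a (t m x y) b
            = t (t x m a) y b + t a y (t x m b) - t x m (t a y b) := by
          rw [ax1 x m a y b]; abel
        rw [e]
        exact I.sub_mem
          (I.add_mem (hc1 _ (hm x a) y b).1 (hI a y _ (hm x b)).1)
          (hm x (t a y b))
      · rw [memIm]
        intro a b
        have e : t a (t x y m) b
            = t (t y x a) m b + t a m (t y x b) - t y x (t a m b) := by
          rw [ax1 y x a m b]; abel
        rw [e]
        exact I.sub_mem (I.add_mem (hm (t y x a) b) (hm a (t y x b)))
          (hI y x _ (hm a b)).1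
    rcases hP I Im hc1 hc2 hc3 hc4 with ⟨h, _⟩ | ⟨h, _⟩
    · exact Or.inl h
    · exact Or.inr h
end

section
/- Let V be a centerless Kantor triple system and I a nonzero K-ideal of V. Then the pair (I⁺, I⁻) with I⁺ = I and I⁻ = {v ∈ V : (VvV) ⊆ I} is a nonzero P-ideal of V. -/
/-- If `I` is a nonzero K-ideal of a centerless Kantor triple system, then the
pair `(I, {v : (V v V) ⊆ I})` is a nonzero P-ideal. -/
theorem Kideal_gives_Pideal
    {V : Type*} [AddCommGroup V] [Module ℂ V]
    (t : V →ₗ[ℂ] V →ₗ[ℂ] V →ₗ[ℂ] V)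
    (ax1 : ∀ u v x y z : V,
      t u v (t x y z) = t (t u v x) y z - t x (t v u y) z + t x y (t u v z))
    (ax2 : ∀ u v x y w : V,
      Ktensor t (Ktensor t u v x) y w
        = Ktensor t (t y x u) v w - Ktensor t (t y x v) u w)
    (hcenterless : ∀ v : V, (∀ x y : V, t x v y = 0) → v = 0)
    (I : Submodule ℂ V)
    (hKideal : ∀ x y : V, ∀ i ∈ I, t x y i ∈ I ∧ t i x y ∈ I)
    (hInz : I ≠ ⊥)
    (Im : Submodule ℂ V)
    (hIm : ∀ v : V, v ∈ Im ↔ ∀ x y : V, t x v y ∈ I) :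
    (∀ i ∈ I, ∀ x y : V, t i x y ∈ I ∧ t x y i ∈ I) ∧
    (∀ m ∈ Im, ∀ x y : V, t x m y ∈ I) ∧
    (∀ m ∈ Im, ∀ x y : V, t m x y ∈ Im ∧ t x y m ∈ Im) ∧
    (∀ i ∈ I, ∀ x y : V, t x i y ∈ Im) ∧
    ¬(I = ⊥ ∧ Im = ⊥) := by
  refine ⟨?_, ?_, ?_, ?_, ?_⟩
  · intro i hi x y
    exact ⟨(hKideal x y i hi).2, (hKideal x y i hi).1⟩
  · intro m hm x y
    exact (hIm m).1 hm x y
  · intro m hm x y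
    constructor
    · rw [hIm]
      intro a b
      have key : t a (t m x y) b
          = t (t x m a) y b + t a y (t x m b) - t x m (t a y b) := by
        rw [ax1 x m a y b]; abel
      rw [key]
      exact Submodule.sub_mem _
        (Submodule.add_mem _
          (hKideal y b (t x m a) ((hIm m).1 hm x a)).2
          (hKideal a y (t x m b) ((hIm m).1 hm x b)).1)
        ((hIm m).1 hm x (t a y b))
    · rw [hIm]
      intro a b
      have key : t a (t x y m) b
          = t (t y x a) m b + t a m (t y x b) - t y x (t a m b) := by
        rw [ax1 y x a m b]; abel
      rw [key]
      exact Submodule.sub_mem _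
        (Submodule.add_mem _
          ((hIm m).1 hm (t y x a) b)
          ((hIm m).1 hm a (t y x b)))
        (hKideal y x (t a m b) ((hIm m).1 hm a b)).1
  · intro i hi x y
    rw [hIm]
    intro a b
    have key : t a (t x i y) b
        = t (t i x a) y b + t a y (t i x b) - t i x (t a y b) := by
      rw [ax1 i x a y b]; abel
    rw [key]
    exact Submodule.sub_mem _
      (Submodule.add_mem _
        (hKideal y b (t i x a) (hKideal x a i hi).2).2
        (hKideal a y (t i x b) (hKideal x b i hi).2).1)
      (hKideal x (t a y b) i hi).2
  · rintro ⟨h, -⟩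
    exact hInz h
end

section
/- Let g = g_{-2} ⊕ ... ⊕ g_2 be the 5-graded Lie algebra with involution σ constructed from a centerless Kantor triple system V, and let T = g_{-1} ⊕ g_1. If (I⁺, I⁻) is a P-ideal of V, then J = I⁻ ⊕ σ(I⁺) is an ideal of the Lie triple system T. -/
/-- If `(I⁺, I⁻)` is a P-ideal of the Kantor triple system `V = g₋₁` of the
Tits-Kantor-Koecher pair `(g, σ)`, then `J = I⁻ ⊕ σ(I⁺)` is an ideal of the
Lie triple system `T = g₋₁ ⊕ g₁`. -/
theorem Pideal_gives_LTS_ideal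
    {L : Type*} [LieRing L] [LieAlgebra ℂ L]
    (g : ℤ → Submodule ℂ L)
    (hdecomp : DirectSum.IsInternal g)
    (hgrad : ∀ p q : ℤ, ∀ x ∈ g p, ∀ y ∈ g q, ⁅x, y⁆ ∈ g (p + q))
    (hbound : ∀ p : ℤ, 2 < |p| → g p = ⊥)
    (σ : L →ₗ⁅ℂ⁆ L)
    (hσ2 : ∀ x : L, σ (σ x) = x)
    (hσg : ∀ p : ℤ, ∀ x ∈ g p, σ x ∈ g (-p))
    (htrans : ∀ p : ℤ, 0 ≤ p → ∀ D ∈ g p,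
      (∀ x ∈ g (-1), ⁅D, x⁆ = 0) → D = 0)
    (hfund : ∀ w ∈ g (-2),
      w ∈ Submodule.span ℂ {z : L | ∃ a ∈ g (-1), ∃ b ∈ g (-1), z = ⁅a, b⁆})
    (hP2 : ∀ D ∈ g 0,
      D ∈ Submodule.span ℂ {z : L | ∃ a ∈ g (-1), ∃ b ∈ g 1, z = ⁅a, b⁆})
    (Ip Im : Submodule ℂ L) (hIp : Ip ≤ g (-1)) (hImle : Im ≤ g (-1))
    (hP1 : ∀ i ∈ Ip, ∀ x ∈ g (-1), ∀ y ∈ g (-1),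
      trip σ i x y ∈ Ip ∧ trip σ x y i ∈ Ip)
    (hP2' : ∀ m ∈ Im, ∀ x ∈ g (-1), ∀ y ∈ g (-1), trip σ x m y ∈ Ip)
    (hP3 : ∀ m ∈ Im, ∀ x ∈ g (-1), ∀ y ∈ g (-1),
      trip σ m x y ∈ Im ∧ trip σ x y m ∈ Im)
    (hP4 : ∀ i ∈ Ip, ∀ x ∈ g (-1), ∀ y ∈ g (-1), trip σ x i y ∈ Im) :
    Im ⊔ Submodule.map σ.toLinearMap Ip ≤ g (-1) ⊔ g 1 ∧
    (∀ j ∈ Im ⊔ Submodule.map σ.toLinearMap Ip,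
      ∀ a ∈ g (-1) ⊔ g 1, ∀ b ∈ g (-1) ⊔ g 1,
        ⁅⁅j, a⁆, b⁆ ∈ Im ⊔ Submodule.map σ.toLinearMap Ip) := by

  classical
  set J := Im ⊔ Submodule.map σ.toLinearMap Ip with hJdef
  have hmapσ : ∀ e : L, σ e ∈ Ip → e ∈ Submodule.map σ.toLinearMap Ip := by
    intro e he
    exact ⟨σ e, he, hσ2 e⟩
  constructor
  · apply sup_le
    · exact le_trans hImle le_sup_left
    · rintro _ ⟨i, hi, rfl⟩
      exact Submodule.mem_sup_right (by simpa using hσg (-1) i (hIp hi))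
  · intro j hj a ha b hb
    obtain ⟨m, hm, j2, hj2, rfl⟩ := Submodule.mem_sup.1 hj
    obtain ⟨i, hi, rfl⟩ := hj2
    obtain ⟨x, hx, a2, ha2, rfl⟩ := Submodule.mem_sup.1 ha
    obtain ⟨z, hz, b2, hb2, rfl⟩ := Submodule.mem_sup.1 hb
    obtain ⟨y, hy, rfl⟩ : ∃ y ∈ g (-1), a2 = σ y :=
      ⟨σ a2, by simpa using hσg 1 a2 ha2, (hσ2 a2).symm⟩
    obtain ⟨w, hw, rfl⟩ : ∃ w ∈ g (-1), b2 = σ w :=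
      ⟨σ b2, by simpa using hσg 1 b2 hb2, (hσ2 b2).symm⟩
    have hmg : m ∈ g (-1) := hImle hm
    have hig : i ∈ g (-1) := hIp hi
    have hσi : (σ : L →ₗ⁅ℂ⁆ L) i ∈ g 1 := by simpa using hσg (-1) i hig
    have hσy : (σ : L →ₗ⁅ℂ⁆ L) y ∈ g 1 := by simpa using hσg (-1) y hy
    have hσw : (σ : L →ₗ⁅ℂ⁆ L) w ∈ g 1 := by simpa using hσg (-1) w hw
    -- the 8 terms
    have hT1 : ⁅⁅m, x⁆, z⁆ ∈ J := by
      have h2 : ⁅m, x⁆ ∈ g (-2) := by simpa using hgrad (-1) (-1) m hmg x hx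
      have h3 : ⁅⁅m, x⁆, z⁆ ∈ g (-3) := by simpa using hgrad (-2) (-1) _ h2 z hz
      rw [hbound (-3) (by norm_num)] at h3
      rw [(Submodule.mem_bot ℂ).1 h3]
      exact Submodule.zero_mem J
    have hT2 : ⁅⁅m, x⁆, σ w⁆ ∈ J := by
      have heq : ⁅⁅m, x⁆, σ w⁆ = -(trip σ x w m) + trip σ m w x := by
        rw [trip, trip, ← lie_skew ⁅x, σ w⁆ m, ← lie_skew ⁅m, σ w⁆ x, lie_lie]
        abel
      rw [heq]
      exact Submodule.mem_sup_left (add_mem (neg_mem (hP3 m hm x hx w hw).2)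
        (hP3 m hm w hw x hx).1)
    have hT3 : ⁅⁅m, σ y⁆, z⁆ ∈ J := Submodule.mem_sup_left (hP3 m hm y hy z hz).1
    have hT4 : ⁅⁅m, σ y⁆, σ w⁆ ∈ J := by
      apply Submodule.mem_sup_right
      apply hmapσ
      have heq : σ ⁅⁅m, σ y⁆, σ w⁆ = -(trip σ y m w) := by
        simp only [trip, LieHom.map_lie, hσ2]
        rw [← lie_skew (σ m) y, neg_lie]
      rw [heq]
      exact neg_mem (hP2' m hm y hy w hw)
    have hT5 : ⁅⁅σ i, x⁆, z⁆ ∈ J := by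
      have heq : ⁅⁅σ i, x⁆, z⁆ = -(trip σ x i z) := by
        rw [trip, ← lie_skew ((σ : L →ₗ⁅ℂ⁆ L) i) x, neg_lie]
      rw [heq]
      exact Submodule.mem_sup_left (neg_mem (hP4 i hi x hx z hz))
    have hT6 : ⁅⁅σ i, x⁆, σ w⁆ ∈ J := by
      apply Submodule.mem_sup_right
      apply hmapσ
      have heq : σ ⁅⁅σ i, x⁆, σ w⁆ = trip σ i x w := by
        simp only [trip, LieHom.map_lie, hσ2]
      rw [heq]
      exact (hP1 i hi x hx w hw).1
    have hT7 : ⁅⁅σ i, σ y⁆, z⁆ ∈ J := by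
      apply Submodule.mem_sup_right
      apply hmapσ
      have heq : σ ⁅⁅σ i, σ y⁆, z⁆ = -(trip σ y z i) + trip σ i z y := by
        simp only [trip, LieHom.map_lie, hσ2]
        rw [← lie_skew ⁅y, σ z⁆ i, ← lie_skew ⁅i, σ z⁆ y, lie_lie]
        abel
      rw [heq]
      exact add_mem (neg_mem (hP1 i hi y hy z hz).2) (hP1 i hi z hz y hy).1
    have hT8 : ⁅⁅σ i, σ y⁆, σ w⁆ ∈ J := by
      have h2 : ⁅σ i, σ y⁆ ∈ g 2 := by simpa using hgrad 1 1 _ hσi _ hσy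
      have h3 : ⁅⁅σ i, σ y⁆, σ w⁆ ∈ g 3 := by simpa using hgrad 2 1 _ h2 _ hσw
      rw [hbound 3 (by norm_num)] at h3
      rw [(Submodule.mem_bot ℂ).1 h3]
      exact Submodule.zero_mem J
    show ⁅⁅m + σ i, x + σ y⁆, z + σ w⁆ ∈ J
    simp only [add_lie, lie_add]
    repeat' apply Submodule.add_mem
    all_goals first
      | exact hT1 | exact hT2 | exact hT3 | exact hT4
      | exact hT5 | exact hT6 | exact hT7 | exact hT8
end

section
/- Let g be a 5-graded Lie algebra with g_{-3} = 0, σ a grade-reversing involution, and define on V = g_{-1} the product (xyz) = [[x,σ(y)],z]. Then the Kantor tensor identity K_{K_{uv}(x),y} = K_{(yxu),v} − K_{(yxv),u} holds for all u,v,x,y ∈ V. -/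
/-- For a 5-graded Lie algebra (so `g₋₃ = 0`) with grade-reversing involution
`σ`, the Kantor tensor identity holds on `V = g₋₁`. -/
theorem kantor_tensor_identity_from_grading
    {L : Type*} [LieRing L] [LieAlgebra ℂ L]
    (g : ℤ → Submodule ℂ L)
    (hdecomp : DirectSum.IsInternal g)
    (hgrad : ∀ p q : ℤ, ∀ x ∈ g p, ∀ y ∈ g q, ⁅x, y⁆ ∈ g (p + q))
    (hbound : ∀ p : ℤ, 2 < |p| → g p = ⊥)
    (σ : L →ₗ⁅ℂ⁆ L)
    (hσ2 : ∀ x : L, σ (σ x) = x)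
    (hσg : ∀ p : ℤ, ∀ x ∈ g p, σ x ∈ g (-p)) :
    ∀ u ∈ g (-1), ∀ v ∈ g (-1), ∀ x ∈ g (-1), ∀ y ∈ g (-1), ∀ w ∈ g (-1),
      tripK σ (tripK σ u v x) y w
        = tripK σ (trip σ y x u) v w - tripK σ (trip σ y x v) u w := by
  intro u hu v hv x hx y hy w hw
  have h3 : g (-3) = ⊥ := hbound (-3) (by decide)
  have h0 : ⁅⁅u, v⁆, y⁆ = 0 := by
    have : ⁅⁅u, v⁆, y⁆ ∈ g (-3) := by
      have huv : ⁅u, v⁆ ∈ g (-2) := hgrad (-1) (-1) u hu v hv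
      exact hgrad (-2) (-1) _ huv y hy
    rw [h3] at this
    simpa using this
  have e1 : ⁅⁅⁅u, v⁆, σ x⁆, y⁆ = ⁅⁅y, σ x⁆, ⁅u, v⁆⁆ := by
    rw [lie_lie ⁅u, v⁆ (σ x) y, h0, lie_zero, sub_zero,
      ← lie_skew ⁅y, σ x⁆ ⁅u, v⁆, ← lie_skew y (σ x)]
    simp only [lie_neg, neg_neg]
  have e2 : ⁅⁅⁅y, σ x⁆, u⁆, v⁆ - ⁅⁅⁅y, σ x⁆, v⁆, u⁆ = ⁅⁅y, σ x⁆, ⁅u, v⁆⁆ := by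
    rw [lie_lie ⁅y, σ x⁆ u v, ← lie_skew ⁅⁅y, σ x⁆, v⁆ u]
    abel
  have key : ⁅⁅⁅u, v⁆, σ x⁆, y⁆ = ⁅⁅⁅y, σ x⁆, u⁆, v⁆ - ⁅⁅⁅y, σ x⁆, v⁆, u⁆ :=
    e1.trans e2.symm
  rw [tripK_eq σ (tripK σ u v x) y w, tripK_eq σ _ v w, tripK_eq σ _ u w,
    tripK_eq σ u v x, trip, trip, key, sub_lie]
end
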